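/- Let G = (V, E, w, μ) be a submodular hypergraph and let ‖·‖ be any norm on ℝ^N. Let x ∈ ℝ^N be nonconstant with ‖x‖ ≤ 1 and such that c = 0 minimizes c ↦ ‖x − c·𝟙‖_{ℓ1,μ}, and set λ̂ = 𝓡_1(x). Define g ∈ ℝ^N by g_v = sgn(x_v)·μ_v if x_v ≠ 0, and g_v = −((μ₁⁺(x) − μ₁⁻(x))/μ⁰(x))·μ_v if x_v = 0 (with g_v = 0 when μ⁰(x) = 0, in which case μ₁⁺(x) = μ₁⁻(x)). Let z′ be any minimizer of z ↦ Q_1(z) − λ̂⟨z, g⟩ over {z : ‖z‖ ≤ 1}, let c′ minimize c ↦ ‖z′ − c·𝟙‖_{ℓ1,μ}, and set x′ = z′ − c′·𝟙. Then, provided x′ is nonconstant, 𝓡_1(x′) ≤ 𝓡_1(x). -/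
import Mathlib


open scoped BigOperators
open Finset

noncomputable section

/-- A set function on the ground set `Fin N` is submodular:
`F(S ∪ T) + F(S ∩ T) ≤ F(S) + F(T)` for all `S, T`. -/
def Submodular {N : ℕ} (F : Finset (Fin N) → ℝ) : Prop :=
  ∀ S T : Finset (Fin N), F (S ∪ T) + F (S ∩ T) ≤ F S + F T

/-- The Lovász extension of a set function, written in its (tie-breaking independent)
level-set integral form, which agrees with the usual sorted-sum definition
`f(x) = Σ_{j=1}^{N-1} F({i_1,…,i_j})(x_{i_j} − x_{i_{j+1}})` for a nonincreasing
ordering `x_{i_1} ≥ … ≥ x_{i_N}`. -/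
def lovasz {N : ℕ} (F : Finset (Fin N) → ℝ) (x : Fin N → ℝ) : ℝ :=
  ∫ t in (⨅ v, x v)..(⨆ v, x v), F (Finset.univ.filter fun v => t < x v)

/-- The inner product `⟨y, x⟩ = Σ_v y_v x_v`. -/
def dotp {N : ℕ} (y x : Fin N → ℝ) : ℝ := ∑ v, y v * x v

/-- The set of subgradients of `f : ℝ^N → ℝ` at `x`. -/
def subgradients {N : ℕ} (f : (Fin N → ℝ) → ℝ) (x : Fin N → ℝ) : Set (Fin N → ℝ) :=
  {y | ∀ x', dotp y (x' - x) ≤ f x' - f x}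

/-- The base polytope of a set function: `y(S) ≤ F(S)` for all `S ⊆ V` and `y(V) = 0`. -/
def basePolytope {N : ℕ} (F : Finset (Fin N) → ℝ) : Set (Fin N → ℝ) :=
  {y | (∀ S : Finset (Fin N), ∑ v ∈ S, y v ≤ F S) ∧ ∑ v, y v = 0}

/-- The sign function (`sgn 0 = 0`). -/
def sgn (a : ℝ) : ℝ := if 0 < a then 1 else if a < 0 then -1 else 0

/-- A vector is nonconstant. -/
def Nonconstant {N : ℕ} (x : Fin N → ℝ) : Prop := ∃ u v, x u ≠ x v

/-- Restriction of a vector to a subset of vertices (zero outside that subset). -/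
def restrictVec {N : ℕ} (x : Fin N → ℝ) (C : Finset (Fin N)) : Fin N → ℝ :=
  fun v => if v ∈ C then x v else 0

/-- Euclidean norm on `ℝ^N`. -/
def l2norm {N : ℕ} (z : Fin N → ℝ) : ℝ := Real.sqrt (∑ v, z v ^ 2)

/-- Supremum norm on `ℝ^N`. -/
def linfNorm {N : ℕ} (z : Fin N → ℝ) : ℝ := ⨆ v, |z v|

/-- A submodular hypergraph `G = (V, E, w, μ)` on `V = Fin N`: hyperedges `E`,
positive vertex weights `μ`, and for each hyperedge `e ∈ E` a scalar `θ_e > 0`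
together with a normalized symmetric submodular weight `w_e : 2^e → [0,1]`
(extended to all of `2^V` by `w_e(S) = w_e(S ∩ e)`). -/
structure SubmodularHypergraph (N : ℕ) where
  E : Finset (Finset (Fin N))
  μ : Fin N → ℝ
  μ_pos : ∀ v, 0 < μ v
  θ : Finset (Fin N) → ℝ
  θ_pos : ∀ e ∈ E, 0 < θ e
  w : Finset (Fin N) → Finset (Fin N) → ℝ
  w_inter : ∀ e ∈ E, ∀ S, w e S = w e (S ∩ e)
  w_submodular : ∀ e ∈ E, Submodular (w e)
  w_nonneg : ∀ e ∈ E, ∀ S, 0 ≤ w e S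
  w_le_one : ∀ e ∈ E, ∀ S, w e S ≤ 1
  w_empty : ∀ e ∈ E, w e ∅ = 0
  w_normalized : ∀ e ∈ E, ∃ S ⊆ e, w e S = 1
  w_symm : ∀ e ∈ E, ∀ S ⊆ e, w e S = w e (e \ S)

namespace SubmodularHypergraph

variable {N : ℕ} (G : SubmodularHypergraph N)

/-- `vol(S) = Σ_{v ∈ S} μ_v`. -/
def vol (S : Finset (Fin N)) : ℝ := ∑ v ∈ S, G.μ v

/-- `vol(∂S) = Σ_{e ∈ E} θ_e w_e(S)`. -/
def volB (S : Finset (Fin N)) : ℝ := ∑ e ∈ G.E, G.θ e * G.w e S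

/-- The Lovász extension `f_e` of the hyperedge weight `w_e`. -/
def fe (e : Finset (Fin N)) (x : Fin N → ℝ) : ℝ := lovasz (G.w e) x

/-- `Q_p(x) = Σ_{e ∈ E} θ_e f_e(x)^p`. -/
def Q (p : ℝ) (x : Fin N → ℝ) : ℝ := ∑ e ∈ G.E, G.θ e * G.fe e x ^ p

/-- `‖x‖_{ℓp,μ}^p = Σ_v μ_v |x_v|^p`. -/
def normLpPow (p : ℝ) (x : Fin N → ℝ) : ℝ := ∑ v, G.μ v * |x v| ^ p

/-- `G` is connected: `vol(∂S) > 0` for all nonempty proper `S ⊂ V`. -/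
def Connected : Prop :=
  ∀ S : Finset (Fin N), S.Nonempty → S ≠ Finset.univ → 0 < G.volB S

/-- Vertices `u, v` are connected in `G`: every `S` with `u ∈ S`, `v ∉ S` has
`vol(∂S) > 0`. -/
def VertConnected (u v : Fin N) : Prop :=
  ∀ S : Finset (Fin N), u ∈ S → v ∉ S → 0 < G.volB S

/-- The conductance `c(S) = vol(∂S) / min{vol(S), vol(V∖S)}`. -/
def conductance (S : Finset (Fin N)) : ℝ := G.volB S / min (G.vol S) (G.vol Sᶜ)

/-- The degree `d_v = Σ_{e ∈ E : v ∈ e} θ_e`. -/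
def degree (v : Fin N) : ℝ := ∑ e ∈ G.E.filter (fun e => v ∈ e), G.θ e

/-- `τ = max_v d_v / μ_v`. -/
def tau : ℝ := ⨆ v, G.degree v / G.μ v

/-- `G` is homogeneous: `w_e(S) = 1` for every `S ∈ 2^e ∖ {∅, e}`. -/
def Homogeneous : Prop :=
  ∀ e ∈ G.E, ∀ S ⊆ e, S ≠ ∅ → S ≠ e → G.w e S = 1

/-- `(λ, x)` is an eigenpair of the `p`-Laplacian `△_p` (for `p > 1` and for `p = 1`). -/
def IsEigenpair (p lam : ℝ) (x : Fin N → ℝ) : Prop :=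
  x ≠ 0 ∧
  ∃ y : Finset (Fin N) → Fin N → ℝ,
    (∀ e ∈ G.E, y e ∈ basePolytope (G.w e) ∧
        ∀ z ∈ basePolytope (G.w e), dotp z x ≤ dotp (y e) x) ∧
    (if 1 < p then
        ∀ v, ∑ e ∈ G.E, G.θ e * G.fe e x ^ (p - 1) * y e v
              = lam * G.μ v * (|x v| ^ (p - 1) * sgn (x v))
      else
        (∀ v, x v ≠ 0 → ∑ e ∈ G.E, G.θ e * y e v = lam * G.μ v * sgn (x v)) ∧
        (∀ v, x v = 0 → |∑ e ∈ G.E, G.θ e * y e v| ≤ lam * G.μ v))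

/-- Vertices `u, v` are connected inside the induced sub-hypergraph `G[W]`
(the boundary volume in `G[W]` of `S ⊆ W` equals `Σ_{e ∈ E} θ_e w_e(S)`). -/
def VertConnectedIn (W : Finset (Fin N)) (u v : Fin N) : Prop :=
  u = v ∨ ∀ S ⊆ W, u ∈ S → v ∉ S → 0 < G.volB S

/-- `C` is (the vertex set of) a connected component of the induced sub-hypergraph `G[W]`. -/
def IsComponent (W C : Finset (Fin N)) : Prop :=
  C ⊆ W ∧ C.Nonempty ∧
    (∀ u ∈ C, ∀ v ∈ C, G.VertConnectedIn W u v) ∧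
    (∀ u ∈ C, ∀ v ∈ W, G.VertConnectedIn W u v → v ∈ C)

end SubmodularHypergraph

def posSupp {N : ℕ} (x : Fin N → ℝ) : Finset (Fin N) := Finset.univ.filter fun v => 0 < x v
def negSupp {N : ℕ} (x : Fin N → ℝ) : Finset (Fin N) := Finset.univ.filter fun v => x v < 0
def nonnegSupp {N : ℕ} (x : Fin N → ℝ) : Finset (Fin N) := Finset.univ.filter fun v => 0 ≤ x v
def nonposSupp {N : ℕ} (x : Fin N → ℝ) : Finset (Fin N) := Finset.univ.filter fun v => x v ≤ 0

namespace SubmodularHypergraph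

variable {N : ℕ} (G : SubmodularHypergraph N)

/-- The number of strong nodal domains of `x` (positive ones plus negative ones). -/
def strongNodalCount (x : Fin N → ℝ) : ℕ :=
  {C : Finset (Fin N) | G.IsComponent (posSupp x) C}.ncard +
  {C : Finset (Fin N) | G.IsComponent (negSupp x) C}.ncard

/-- The number of weak nodal domains of `x` (positive ones plus negative ones). -/
def weakNodalCount (x : Fin N → ℝ) : ℕ :=
  {C : Finset (Fin N) | G.IsComponent (nonnegSupp x) C}.ncard +
  {C : Finset (Fin N) | G.IsComponent (nonposSupp x) C}.ncard

/-- The collection of strong nodal domains of `x`. -/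
def strongNodalDomains (x : Fin N → ℝ) : Set (Finset (Fin N)) :=
  {C | G.IsComponent (posSupp x) C ∨ G.IsComponent (negSupp x) C}

/-- The collection of weak nodal domains of `x`. -/
def weakNodalDomains (x : Fin N → ℝ) : Set (Finset (Fin N)) :=
  {C | G.IsComponent (nonnegSupp x) C ∨ G.IsComponent (nonposSupp x) C}

/-- `Z_{p,μ}(x) = min_c ‖x − c·𝟙‖_{ℓp,μ}^p`. -/
def Z (p : ℝ) (x : Fin N → ℝ) : ℝ := ⨅ c : ℝ, ∑ v, G.μ v * |x v - c| ^ p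

/-- `𝓡_p(x) = Q_p(x) / Z_{p,μ}(x)`. -/
def Rq (p : ℝ) (x : Fin N → ℝ) : ℝ := G.Q p x / G.Z p x

/-- The `k`-way Cheeger constant `h_k`. -/
def cheegerConst (k : ℕ) : ℝ :=
  sInf {c : ℝ | ∃ S : Fin k → Finset (Fin N),
    (∀ i, (S i).Nonempty) ∧ (∀ i j, i ≠ j → Disjoint (S i) (S j)) ∧
    c = ⨆ i, G.conductance (S i)}

end SubmodularHypergraph

/-- There is an odd continuous map `h : A → ℝ^k ∖ {0}`. -/
def genusLE {N : ℕ} (A : Set (Fin N → ℝ)) (k : ℕ) : Prop :=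
  ∃ h : (Fin N → ℝ) → (Fin k → ℝ),
    ContinuousOn h A ∧ (∀ x ∈ A, h (-x) = -h x) ∧ ∀ x ∈ A, h x ≠ 0

/-- The Krasnoselski genus of a set. -/
def genus {N : ℕ} (A : Set (Fin N → ℝ)) : ℕ∞ :=
  sInf ((fun n : ℕ => (n : ℕ∞)) '' {n | genusLE A n})

namespace SubmodularHypergraph

variable {N : ℕ} (G : SubmodularHypergraph N)

/-- The `k`-th variational eigenvalue `λ_k^{(p)}` of `△_p`:
`min` over closed symmetric `A ⊆ S_{p,μ}` with `γ(A) ≥ k` of `max_{x ∈ A} Q_p(x)`. -/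
def varEigen (p : ℝ) (k : ℕ) : ℝ :=
  sInf ((fun A : Set (Fin N → ℝ) => sSup (G.Q p '' A)) ''
    {A | IsClosed A ∧ (∀ x ∈ A, -x ∈ A) ∧
         A ⊆ {x | G.normLpPow p x = 1} ∧ (k : ℕ∞) ≤ genus A})

end SubmodularHypergraph

section Stmt18Aux

variable {N : ℕ}

private lemma lovasz_sub_const' [Nonempty (Fin N)] (F : Finset (Fin N) → ℝ)
    (x : Fin N → ℝ) (c : ℝ) : lovasz F (fun v => x v - c) = lovasz F x := by
  unfold lovasz
  have h1 : (⨅ v, (x v - c)) = (⨅ v, x v) - c := by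
    simpa [sub_eq_add_neg] using
      ((OrderIso.addRight (-c)).map_ciInf (Set.finite_range x).bddBelow).symm
  have h2 : (⨆ v, (x v - c)) = (⨆ v, x v) - c := by
    simpa [sub_eq_add_neg] using
      ((OrderIso.addRight (-c)).map_ciSup (Set.finite_range x).bddAbove).symm
  rw [h1, h2]
  have hcond : ∀ t : ℝ, (Finset.univ.filter fun v => t < x v - c)
      = (Finset.univ.filter fun v => t + c < x v) := by
    intro t; ext v; simp [lt_sub_iff_add_lt]
  calc (∫ t in ((⨅ v, x v) - c)..((⨆ v, x v) - c),
          F (Finset.univ.filter fun v => t < x v - c))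
      = ∫ t in ((⨅ v, x v) - c)..((⨆ v, x v) - c),
          (fun s => F (Finset.univ.filter fun v => s < x v)) (t + c) := by
        simp_rw [hcond]
    _ = ∫ t in ((⨅ v, x v) - c + c)..((⨆ v, x v) - c + c),
          F (Finset.univ.filter fun v => t < x v) := by
        rw [intervalIntegral.integral_comp_add_right
          (fun s => F (Finset.univ.filter fun v => s < x v)) c]
    _ = _ := by rw [sub_add_cancel, sub_add_cancel]

private lemma fe_nonneg' [Nonempty (Fin N)] (G : SubmodularHypergraph N) {e : Finset (Fin N)}
    (he : e ∈ G.E) (x : Fin N → ℝ) : 0 ≤ G.fe e x := by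
  unfold SubmodularHypergraph.fe lovasz
  apply intervalIntegral.integral_nonneg
  · obtain ⟨v⟩ := ‹Nonempty (Fin N)›
    exact le_trans (ciInf_le (Set.finite_range x).bddBelow v)
      (le_ciSup (Set.finite_range x).bddAbove v)
  · intro u _; exact G.w_nonneg e he _

private lemma Q_one_eq' (G : SubmodularHypergraph N) (x : Fin N → ℝ) :
    G.Q 1 x = ∑ e ∈ G.E, G.θ e * G.fe e x := by
  unfold SubmodularHypergraph.Q
  refine Finset.sum_congr rfl fun e _ => ?_
  rw [Real.rpow_one]

private lemma Q_one_nonneg' [Nonempty (Fin N)] (G : SubmodularHypergraph N) (x : Fin N → ℝ) :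
    0 ≤ G.Q 1 x := by
  rw [Q_one_eq']
  exact Finset.sum_nonneg fun e he => mul_nonneg (G.θ_pos e he).le (fe_nonneg' G he x)

private lemma Q_one_sub_const' [Nonempty (Fin N)] (G : SubmodularHypergraph N)
    (x : Fin N → ℝ) (c : ℝ) : G.Q 1 (fun v => x v - c) = G.Q 1 x := by
  rw [Q_one_eq', Q_one_eq']
  refine Finset.sum_congr rfl fun e _ => ?_
  unfold SubmodularHypergraph.fe
  rw [lovasz_sub_const']

private lemma Z_one_eq' (G : SubmodularHypergraph N) (x : Fin N → ℝ)
    (h : ∀ c, ∑ v, G.μ v * |x v| ≤ ∑ v, G.μ v * |x v - c|) :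
    G.Z 1 x = ∑ v, G.μ v * |x v| := by
  unfold SubmodularHypergraph.Z
  have hb : ∀ c : ℝ, (∑ v, G.μ v * |x v - c| ^ (1:ℝ)) = ∑ v, G.μ v * |x v - c| := by
    intro c; exact Finset.sum_congr rfl fun v _ => by rw [Real.rpow_one]
  apply le_antisymm
  · have h0 := ciInf_le (f := fun c : ℝ => ∑ v, G.μ v * |x v - c| ^ (1:ℝ))
      ⟨0, by
        rintro y ⟨c, rfl⟩
        exact Finset.sum_nonneg fun v _ => mul_nonneg (G.μ_pos v).le
          (Real.rpow_nonneg (abs_nonneg _) _)⟩ 0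
    simpa [hb 0] using h0
  · exact le_ciInf fun c => by rw [hb]; exact h c

private lemma sum_split' (x : Fin N → ℝ) (f : Fin N → ℝ) :
    ∑ v, f v = (∑ v ∈ Finset.univ.filter (fun v => 0 < x v), f v)
      + (∑ v ∈ Finset.univ.filter (fun v => x v < 0), f v)
      + (∑ v ∈ Finset.univ.filter (fun v => x v = 0), f v) := by
  rw [← Finset.sum_filter_add_sum_filter_not Finset.univ (fun v => 0 < x v) f, add_assoc]
  congr 1
  rw [← Finset.sum_filter_add_sum_filter_not
    (Finset.univ.filter fun v => ¬ 0 < x v) (fun v => x v < 0) f]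
  congr 1
  · congr 1
    ext v
    simp only [Finset.mem_filter, Finset.mem_univ, true_and, not_lt]
    constructor
    · rintro ⟨_, h⟩; exact h
    · intro h; exact ⟨h.le, h⟩
  · congr 1
    ext v
    simp only [Finset.mem_filter, Finset.mem_univ, true_and, not_lt]
    constructor
    · rintro ⟨h1, h2⟩; exact le_antisymm h1 h2
    · intro h; exact ⟨h.le, h.ge⟩

private lemma key_PMZ (G : SubmodularHypergraph N) (x : Fin N → ℝ) (hnc : Nonconstant x)
    (h0min : ∀ c : ℝ, ∑ v, G.μ v * |x v| ≤ ∑ v, G.μ v * |x v - c|) :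
    (∑ u ∈ posSupp x, G.μ u) ≤ (∑ u ∈ negSupp x, G.μ u)
        + (∑ u ∈ Finset.univ.filter (fun u => x u = 0), G.μ u)
    ∧ (∑ u ∈ negSupp x, G.μ u) ≤ (∑ u ∈ posSupp x, G.μ u)
        + (∑ u ∈ Finset.univ.filter (fun u => x u = 0), G.μ u) := by
  classical
  obtain ⟨u0, v0, huv⟩ := hnc
  have hne : (Finset.univ.filter fun v => x v ≠ 0).Nonempty := by
    by_contra hcon
    rw [Finset.not_nonempty_iff_eq_empty] at hcon
    have h1 : x u0 = 0 := by
      by_contra h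
      have : u0 ∈ Finset.univ.filter fun v => x v ≠ 0 := by simp [h]
      simp [hcon] at this
    have h2 : x v0 = 0 := by
      by_contra h
      have : v0 ∈ Finset.univ.filter fun v => x v ≠ 0 := by simp [h]
      simp [hcon] at this
    exact huv (h1.trans h2.symm)
  set s := (Finset.univ.filter fun v => x v ≠ 0).image fun v => |x v| with hs
  have hsne : s.Nonempty := hne.image _
  set ε := s.min' hsne with hε
  have hεpos : 0 < ε := by
    obtain ⟨v, hv, hveq⟩ := Finset.mem_image.mp (s.min'_mem hsne)
    rw [hε, ← hveq]
    exact abs_pos.mpr (by simpa using hv)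
  have hεle : ∀ v, x v ≠ 0 → ε ≤ |x v| := by
    intro v hv
    exact s.min'_le _ (Finset.mem_image.mpr ⟨v, by simpa using hv, rfl⟩)
  -- first inequality: c = ε
  have key1 : ∀ v, G.μ v * |x v - ε| =
      G.μ v * |x v| + ε * (if 0 < x v then -G.μ v else G.μ v) := by
    intro v
    rcases lt_trichotomy (x v) 0 with h | h | h
    · rw [if_neg (by linarith), abs_of_neg h, abs_of_neg (by linarith)]; ring
    · rw [if_neg (by rw [h]; exact lt_irrefl 0), h]
      rw [abs_of_neg (by linarith : (0:ℝ) - ε < 0)]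
      simp only [abs_zero, mul_zero, zero_add]; ring
    · rw [if_pos h, abs_of_pos h]
      have : ε ≤ x v := le_trans (hεle v h.ne') (le_of_eq (abs_of_pos h))
      rw [abs_of_nonneg (by linarith)]; ring
  have h1 := h0min ε
  rw [Finset.sum_congr rfl (fun v _ => key1 v), Finset.sum_add_distrib,
    ← Finset.mul_sum] at h1
  have hd1 : 0 ≤ ∑ v, (if 0 < x v then -G.μ v else G.μ v) := by
    have hmul : (0:ℝ) ≤ ε * ∑ v, (if 0 < x v then -G.μ v else G.μ v) := by linarith
    exact (mul_nonneg_iff_of_pos_left hεpos).mp hmul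
  -- second inequality: c = -ε
  have key2 : ∀ v, G.μ v * |x v - (-ε)| =
      G.μ v * |x v| + ε * (if x v < 0 then -G.μ v else G.μ v) := by
    intro v
    rcases lt_trichotomy (x v) 0 with h | h | h
    · rw [if_pos h, abs_of_neg h]
      have : ε ≤ -x v := le_trans (hεle v h.ne) (le_of_eq (abs_of_neg h))
      rw [abs_of_nonpos (by linarith : x v - (-ε) ≤ 0)]; ring
    · rw [if_neg (by rw [h]; exact lt_irrefl 0), h]
      rw [abs_of_nonneg (by linarith : (0:ℝ) - (-ε) ≥ 0)]
      simp only [abs_zero, mul_zero, zero_add]; ring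
    · rw [if_neg (by linarith), abs_of_pos h, abs_of_pos (by linarith : 0 < x v - (-ε))]
      ring
  have h2 := h0min (-ε)
  rw [Finset.sum_congr rfl (fun v _ => key2 v), Finset.sum_add_distrib,
    ← Finset.mul_sum] at h2
  have hd2 : 0 ≤ ∑ v, (if x v < 0 then -G.μ v else G.μ v) := by
    have hmul : (0:ℝ) ≤ ε * ∑ v, (if x v < 0 then -G.μ v else G.μ v) := by linarith
    exact (mul_nonneg_iff_of_pos_left hεpos).mp hmul
  -- evaluate the two sums via the three-way split
  have hsplit1 : (∑ v, (if 0 < x v then -G.μ v else G.μ v)) =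
      -(∑ u ∈ posSupp x, G.μ u) + (∑ u ∈ negSupp x, G.μ u)
        + (∑ u ∈ Finset.univ.filter (fun u => x u = 0), G.μ u) := by
    rw [sum_split' x]
    have e1 : (∑ v ∈ Finset.univ.filter (fun v => 0 < x v), (if 0 < x v then -G.μ v else G.μ v))
        = -(∑ u ∈ posSupp x, G.μ u) := by
      simp only [posSupp]
      rw [← Finset.sum_neg_distrib]
      exact Finset.sum_congr rfl fun v hv => if_pos (Finset.mem_filter.mp hv).2
    have e2 : (∑ v ∈ Finset.univ.filter (fun v => x v < 0), (if 0 < x v then -G.μ v else G.μ v))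
        = ∑ u ∈ negSupp x, G.μ u := by
      simp only [negSupp]
      refine Finset.sum_congr rfl fun v hv => ?_
      have := (Finset.mem_filter.mp hv).2
      rw [if_neg (by linarith)]
    have e3 : (∑ v ∈ Finset.univ.filter (fun v => x v = 0), (if 0 < x v then -G.μ v else G.μ v))
        = ∑ u ∈ Finset.univ.filter (fun u => x u = 0), G.μ u := by
      refine Finset.sum_congr rfl fun v hv => ?_
      have := (Finset.mem_filter.mp hv).2
      rw [if_neg (by rw [this]; exact lt_irrefl 0)]
    rw [e1, e2, e3]
  have hsplit2 : (∑ v, (if x v < 0 then -G.μ v else G.μ v)) =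
      (∑ u ∈ posSupp x, G.μ u) + -(∑ u ∈ negSupp x, G.μ u)
        + (∑ u ∈ Finset.univ.filter (fun u => x u = 0), G.μ u) := by
    rw [sum_split' x]
    have e1 : (∑ v ∈ Finset.univ.filter (fun v => 0 < x v), (if x v < 0 then -G.μ v else G.μ v))
        = ∑ u ∈ posSupp x, G.μ u := by
      simp only [posSupp]
      refine Finset.sum_congr rfl fun v hv => ?_
      have := (Finset.mem_filter.mp hv).2
      rw [if_neg (by linarith)]
    have e2 : (∑ v ∈ Finset.univ.filter (fun v => x v < 0), (if x v < 0 then -G.μ v else G.μ v))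
        = -(∑ u ∈ negSupp x, G.μ u) := by
      simp only [negSupp]
      rw [← Finset.sum_neg_distrib]
      exact Finset.sum_congr rfl fun v hv => if_pos (Finset.mem_filter.mp hv).2
    have e3 : (∑ v ∈ Finset.univ.filter (fun v => x v = 0), (if x v < 0 then -G.μ v else G.μ v))
        = ∑ u ∈ Finset.univ.filter (fun u => x u = 0), G.μ u := by
      refine Finset.sum_congr rfl fun v hv => ?_
      have := (Finset.mem_filter.mp hv).2
      rw [if_neg (by rw [this]; exact lt_irrefl 0)]
    rw [e1, e2, e3]
  rw [hsplit1] at hd1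
  rw [hsplit2] at hd2
  constructor <;> linarith

end Stmt18Aux

/-- one step of the inverse power method decreases `𝓡₁`. -/
theorem stmt18 {N : ℕ} (G : SubmodularHypergraph N)
    (nrm : (Fin N → ℝ) → ℝ)
    (hn0 : ∀ z, 0 ≤ nrm z)
    (hn1 : ∀ z, nrm z = 0 → z = 0)
    (hn2 : ∀ (a : ℝ) (z : Fin N → ℝ), nrm (a • z) = |a| * nrm z)
    (hn3 : ∀ z w : Fin N → ℝ, nrm (z + w) ≤ nrm z + nrm w)
    (x : Fin N → ℝ) (hnc : Nonconstant x) (hx1 : nrm x ≤ 1)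
    (h0min : ∀ c : ℝ, ∑ v, G.μ v * |x v| ≤ ∑ v, G.μ v * |x v - c|)
    (lamh : ℝ) (hlam : lamh = G.Rq 1 x)
    (g : Fin N → ℝ)
    (hg : g = fun v =>
      if 0 < x v then G.μ v
      else if x v < 0 then -G.μ v
      else if (∑ u ∈ Finset.univ.filter (fun u => x u = 0), G.μ u) = 0 then 0
      else -(((∑ u ∈ posSupp x, G.μ u) - ∑ u ∈ negSupp x, G.μ u)
              / ∑ u ∈ Finset.univ.filter (fun u => x u = 0), G.μ u) * G.μ v)
    (z' : Fin N → ℝ) (hz'le : nrm z' ≤ 1)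
    (hz'min : ∀ z : Fin N → ℝ, nrm z ≤ 1 →
      G.Q 1 z' - lamh * dotp z' g ≤ G.Q 1 z - lamh * dotp z g)
    (c' : ℝ)
    (hc' : ∀ c : ℝ, ∑ v, G.μ v * |z' v - c'| ≤ ∑ v, G.μ v * |z' v - c|)
    (x' : Fin N → ℝ) (hx' : x' = fun v => z' v - c')
    (hnc' : Nonconstant x') :
    G.Rq 1 x' ≤ G.Rq 1 x := by
  classical
  obtain ⟨u0, v0, huv0⟩ := hnc
  haveI : Nonempty (Fin N) := ⟨u0⟩
  set P := ∑ u ∈ posSupp x, G.μ u with hP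
  set M := ∑ u ∈ negSupp x, G.μ u with hM
  set Z0 := ∑ u ∈ Finset.univ.filter (fun u => x u = 0), G.μ u with hZ0
  obtain ⟨hPM1, hPM2⟩ := key_PMZ G x ⟨u0, v0, huv0⟩ h0min
  have hZ0nonneg : 0 ≤ Z0 := Finset.sum_nonneg fun v _ => (G.μ_pos v).le
  have habsPM : |P - M| ≤ Z0 := abs_le.mpr ⟨by linarith, by linarith⟩
  have hgle : ∀ v, |g v| ≤ G.μ v := by
    intro v
    rw [hg]
    simp only
    split_ifs with h1 h2 h3
    · rw [abs_of_pos (G.μ_pos v)]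
    · rw [abs_neg, abs_of_pos (G.μ_pos v)]
    · simpa using (G.μ_pos v).le
    · have hZ0pos : 0 < Z0 := lt_of_le_of_ne hZ0nonneg (Ne.symm h3)
      rw [abs_mul, abs_neg, abs_div, abs_of_pos hZ0pos, abs_of_pos (G.μ_pos v)]
      have hle1 : |P - M| / Z0 ≤ 1 := (div_le_one hZ0pos).mpr habsPM
      calc |P - M| / Z0 * G.μ v ≤ 1 * G.μ v :=
            mul_le_mul_of_nonneg_right hle1 (G.μ_pos v).le
        _ = G.μ v := one_mul _
  have hsumg0 : (∑ v, (if 0 < x v then G.μ v else if x v < 0 then -G.μ v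
      else if Z0 = 0 then 0 else -((P - M) / Z0) * G.μ v)) = 0 := by
    rw [sum_split' x]
    have e1 : (∑ v ∈ Finset.univ.filter (fun v => 0 < x v),
        (if 0 < x v then G.μ v else if x v < 0 then -G.μ v
          else if Z0 = 0 then 0 else -((P - M) / Z0) * G.μ v)) = P := by
      rw [hP]
      simp only [posSupp]
      exact Finset.sum_congr rfl fun v hv => if_pos (Finset.mem_filter.mp hv).2
    have e2 : (∑ v ∈ Finset.univ.filter (fun v => x v < 0),
        (if 0 < x v then G.μ v else if x v < 0 then -G.μ v
          else if Z0 = 0 then 0 else -((P - M) / Z0) * G.μ v)) = -M := by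
      rw [hM]
      simp only [negSupp]
      rw [← Finset.sum_neg_distrib]
      refine Finset.sum_congr rfl fun v hv => ?_
      have h := (Finset.mem_filter.mp hv).2
      rw [if_neg (by linarith), if_pos h]
    have e3 : (∑ v ∈ Finset.univ.filter (fun v => x v = 0),
        (if 0 < x v then G.μ v else if x v < 0 then -G.μ v
          else if Z0 = 0 then 0 else -((P - M) / Z0) * G.μ v)) = -(P - M) := by
      have estep : (∑ v ∈ Finset.univ.filter (fun v => x v = 0),
          (if 0 < x v then G.μ v else if x v < 0 then -G.μ v
            else if Z0 = 0 then 0 else -((P - M) / Z0) * G.μ v))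
          = ∑ v ∈ Finset.univ.filter (fun v => x v = 0),
              (if Z0 = 0 then 0 else -((P - M) / Z0) * G.μ v) := by
        refine Finset.sum_congr rfl fun v hv => ?_
        have h := (Finset.mem_filter.mp hv).2
        rw [if_neg (by rw [h]; exact lt_irrefl 0), if_neg (by rw [h]; exact lt_irrefl 0)]
      rw [estep]
      by_cases h3 : Z0 = 0
      · have hPMeq : P = M := le_antisymm (by linarith) (by linarith)
        simp [h3, hPMeq]
      · rw [Finset.sum_congr rfl (fun v _ => if_neg h3), ← Finset.mul_sum, ← hZ0,
          neg_mul, div_mul_cancel₀ _ h3]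
    rw [e1, e2, e3]
    ring
  have hsumg : ∑ v, g v = 0 := by
    rw [hg]; exact hsumg0
  have hdxg : dotp x g = ∑ v, G.μ v * |x v| := by
    rw [hg]
    unfold dotp
    refine Finset.sum_congr rfl fun v _ => ?_
    simp only
    rcases lt_trichotomy (x v) 0 with h | h | h
    · rw [if_neg (by linarith), if_pos h, abs_of_neg h]; ring
    · rw [h]; simp
    · rw [if_pos h, abs_of_pos h]; ring
  have hdzg : ∀ z : Fin N → ℝ, dotp z g ≤ ∑ v, G.μ v * |z v| := by
    intro z
    unfold dotp
    refine Finset.sum_le_sum fun v _ => ?_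
    calc z v * g v ≤ |z v * g v| := le_abs_self _
      _ = |z v| * |g v| := abs_mul _ _
      _ ≤ |z v| * G.μ v := mul_le_mul_of_nonneg_left (hgle v) (abs_nonneg _)
      _ = G.μ v * |z v| := mul_comm _ _
  have habs_pos : ∀ y : Fin N → ℝ, Nonconstant y → 0 < ∑ v, G.μ v * |y v| := by
    rintro y ⟨a, b, hab⟩
    have hex : ∃ w, y w ≠ 0 := by
      by_contra hcon
      push_neg at hcon
      exact hab ((hcon a).trans (hcon b).symm)
    obtain ⟨w, hw⟩ := hex
    refine Finset.sum_pos' (fun v _ => mul_nonneg (G.μ_pos v).le (abs_nonneg _))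
      ⟨w, Finset.mem_univ w, mul_pos (G.μ_pos w) (abs_pos.mpr hw)⟩
  have hSx_pos : 0 < ∑ v, G.μ v * |x v| := habs_pos x ⟨u0, v0, huv0⟩
  have hSx'_pos : 0 < ∑ v, G.μ v * |x' v| := habs_pos x' hnc'
  have hZ1x : G.Z 1 x = ∑ v, G.μ v * |x v| := Z_one_eq' G x h0min
  have hx'min : ∀ c : ℝ, ∑ v, G.μ v * |x' v| ≤ ∑ v, G.μ v * |x' v - c| := by
    intro c
    have h := hc' (c' + c)
    rw [hx']
    simpa only [sub_sub] using h
  have hZ1x' : G.Z 1 x' = ∑ v, G.μ v * |x' v| := Z_one_eq' G x' hx'min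
  have hlam0 : 0 ≤ lamh := by
    rw [hlam]
    unfold SubmodularHypergraph.Rq
    exact div_nonneg (Q_one_nonneg' G x) (by rw [hZ1x]; exact hSx_pos.le)
  have hQx : G.Q 1 x = lamh * ∑ v, G.μ v * |x v| := by
    rw [hlam]
    unfold SubmodularHypergraph.Rq
    rw [hZ1x, div_mul_cancel₀ _ hSx_pos.ne']
  have hQeq : G.Q 1 x' = G.Q 1 z' := by
    rw [hx']; exact Q_one_sub_const' G z' c'
  have hdotx' : dotp x' g = dotp z' g := by
    rw [hx']
    unfold dotp
    simp only [sub_mul, Finset.sum_sub_distrib, ← Finset.mul_sum, hsumg, mul_zero, sub_zero]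
  have hchain : G.Q 1 x' ≤ lamh * dotp x' g := by
    have h1 := hz'min x hx1
    have h2 : G.Q 1 x - lamh * dotp x g = 0 := by rw [hdxg, hQx]; ring
    rw [hQeq, hdotx']
    linarith
  have hfinal : G.Q 1 x' ≤ lamh * ∑ v, G.μ v * |x' v| :=
    le_trans hchain (mul_le_mul_of_nonneg_left (hdzg x') hlam0)
  calc G.Rq 1 x' = G.Q 1 x' / (∑ v, G.μ v * |x' v|) := by
        unfold SubmodularHypergraph.Rq; rw [hZ1x']
    _ ≤ lamh := (div_le_iff₀ hSx'_pos).mpr hfinal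
    _ = G.Rq 1 x := hlam
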